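/- Let f = (f¹,f²,f³) : ℝ³ → ℝ³ be a smooth contact map of the first Heisenberg group. Then at every point the determinant of the (Euclidean) Jacobian matrix of f equals λ(f)², where λ(f) = Xf¹·Yf² − Xf²·Yf¹. (Equivalently, f_*(X ∧ Y ∧ T) = λ(f)² · X ∧ Y ∧ T and f^*(dx ∧ dy ∧ θ) = λ(f)² · dx ∧ dy ∧ θ.) -/

import Mathlib

/-- The horizontal vector field `X g := ∂_x g − (y/2)·∂_t g` on `ℝ³` with coordinates
`(x, y, t) = (p 0, p 1, p 2)`. -/
noncomputable def Xd (g : (Fin 3 → ℝ) → ℝ) : (Fin 3 → ℝ) → ℝ :=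
  fun p => fderiv ℝ g p (Pi.single 0 1) - p 1 / 2 * fderiv ℝ g p (Pi.single 2 1)

/-- The horizontal vector field `Y g := ∂_y g + (x/2)·∂_t g`. -/
noncomputable def Yd (g : (Fin 3 → ℝ) → ℝ) : (Fin 3 → ℝ) → ℝ :=
  fun p => fderiv ℝ g p (Pi.single 1 1) + p 0 / 2 * fderiv ℝ g p (Pi.single 2 1)

/-- The vertical vector field `T g := ∂_t g`. -/
noncomputable def Td (g : (Fin 3 → ℝ) → ℝ) : (Fin 3 → ℝ) → ℝ :=
  fun p => fderiv ℝ g p (Pi.single 2 1)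

/-- A map `f = (f¹, f², f³) : ℝ³ → ℝ³` is a contact map of the first Heisenberg group if
`Xf³ + (1/2)f²·Xf¹ − (1/2)f¹·Xf² = 0` and `Yf³ + (1/2)f²·Yf¹ − (1/2)f¹·Yf² = 0`
identically. -/
def IsContact3 (f : (Fin 3 → ℝ) → (Fin 3 → ℝ)) : Prop :=
  (∀ p, Xd (fun q => f q 2) p + (1/2) * f p 1 * Xd (fun q => f q 0) p
      - (1/2) * f p 0 * Xd (fun q => f q 1) p = 0)
  ∧ (∀ p, Yd (fun q => f q 2) p + (1/2) * f p 1 * Yd (fun q => f q 0) p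
      - (1/2) * f p 0 * Yd (fun q => f q 1) p = 0)

/-- `λ(f) := Xf¹·Yf² − Xf²·Yf¹`. -/
noncomputable def lam3 (f : (Fin 3 → ℝ) → (Fin 3 → ℝ)) : (Fin 3 → ℝ) → ℝ :=
  fun p => Xd (fun q => f q 0) p * Yd (fun q => f q 1) p
    - Xd (fun q => f q 1) p * Yd (fun q => f q 0) p

section Aux

variable {g : (Fin 3 → ℝ) → ℝ}

/-- derivative of `q ↦ fderiv g q v` -/
lemma hasFDerivAt_fderiv_apply (hg : ContDiff ℝ (⊤ : ℕ∞) g) (p v : Fin 3 → ℝ) :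
    HasFDerivAt (fun q => fderiv ℝ g q v) ((fderiv ℝ (fderiv ℝ g) p).flip v) p := by
  have h1 : HasFDerivAt (fderiv ℝ g) (fderiv ℝ (fderiv ℝ g) p) p :=
    (((hg.fderiv_right (m := (⊤ : ℕ∞)) (by simp)).differentiable (by simp)) p).hasFDerivAt
  simpa using h1.clm_apply (hasFDerivAt_const v p)

lemma contDiff_fderiv_apply (hg : ContDiff ℝ (⊤ : ℕ∞) g) (v : Fin 3 → ℝ) :
    ContDiff ℝ (⊤ : ℕ∞) (fun q => fderiv ℝ g q v) :=
  (hg.fderiv_right (m := (⊤ : ℕ∞)) (by simp)).clm_apply contDiff_const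

lemma hasFDerivAt_coord (k : Fin 3) (p : Fin 3 → ℝ) :
    HasFDerivAt (fun q : Fin 3 → ℝ => q k / 2)
      ((1/2 : ℝ) • (ContinuousLinearMap.proj k : ((i : Fin 3) → ℝ) →L[ℝ] ℝ)) p := by
  have heq : (fun q : Fin 3 → ℝ => q k / 2)
      = fun q : Fin 3 → ℝ => (1/2 : ℝ) * (ContinuousLinearMap.proj k
        : ((i : Fin 3) → ℝ) →L[ℝ] ℝ) q := by
    funext q; simp; ring
  rw [heq]
  exact ((ContinuousLinearMap.proj k :
      ((i : Fin 3) → ℝ) →L[ℝ] ℝ)).hasFDerivAt.const_mul (1/2 : ℝ)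

lemma contDiff_Xd (hg : ContDiff ℝ (⊤ : ℕ∞) g) : ContDiff ℝ (⊤ : ℕ∞) (Xd g) := by
  unfold Xd
  exact (contDiff_fderiv_apply hg _).sub
    ((((ContinuousLinearMap.proj 1 : ((i : Fin 3) → ℝ) →L[ℝ] ℝ)).contDiff.div_const 2).mul
      (contDiff_fderiv_apply hg _))

lemma contDiff_Yd (hg : ContDiff ℝ (⊤ : ℕ∞) g) : ContDiff ℝ (⊤ : ℕ∞) (Yd g) := by
  unfold Yd
  exact (contDiff_fderiv_apply hg _).add
    ((((ContinuousLinearMap.proj 0 : ((i : Fin 3) → ℝ) →L[ℝ] ℝ)).contDiff.div_const 2).mul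
      (contDiff_fderiv_apply hg _))

lemma fderiv_Xd_apply (hg : ContDiff ℝ (⊤ : ℕ∞) g) (p w : Fin 3 → ℝ) :
    fderiv ℝ (Xd g) p w = fderiv ℝ (fderiv ℝ g) p w (Pi.single 0 1)
      - (w 1 / 2 * fderiv ℝ g p (Pi.single 2 1)
         + p 1 / 2 * fderiv ℝ (fderiv ℝ g) p w (Pi.single 2 1)) := by
  have H : HasFDerivAt (Xd g)
      ((fderiv ℝ (fderiv ℝ g) p).flip (Pi.single 0 1) -
        ((p 1 / 2) • ((fderiv ℝ (fderiv ℝ g) p).flip (Pi.single 2 1))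
          + (fderiv ℝ g p (Pi.single 2 1)) •
              ((1/2 : ℝ) • (ContinuousLinearMap.proj 1 : ((i : Fin 3) → ℝ) →L[ℝ] ℝ)))) p := by
    exact (hasFDerivAt_fderiv_apply hg p _).sub
      ((hasFDerivAt_coord 1 p).mul (hasFDerivAt_fderiv_apply hg p _))
  rw [H.fderiv]
  simp [ContinuousLinearMap.flip_apply]
  ring

lemma fderiv_Yd_apply (hg : ContDiff ℝ (⊤ : ℕ∞) g) (p w : Fin 3 → ℝ) :
    fderiv ℝ (Yd g) p w = fderiv ℝ (fderiv ℝ g) p w (Pi.single 1 1)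
      + (w 0 / 2 * fderiv ℝ g p (Pi.single 2 1)
         + p 0 / 2 * fderiv ℝ (fderiv ℝ g) p w (Pi.single 2 1)) := by
  have H : HasFDerivAt (Yd g)
      ((fderiv ℝ (fderiv ℝ g) p).flip (Pi.single 1 1) +
        ((p 0 / 2) • ((fderiv ℝ (fderiv ℝ g) p).flip (Pi.single 2 1))
          + (fderiv ℝ g p (Pi.single 2 1)) •
              ((1/2 : ℝ) • (ContinuousLinearMap.proj 0 : ((i : Fin 3) → ℝ) →L[ℝ] ℝ)))) p := by
    exact (hasFDerivAt_fderiv_apply hg p _).add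
      ((hasFDerivAt_coord 0 p).mul (hasFDerivAt_fderiv_apply hg p _))
  rw [H.fderiv]
  simp [ContinuousLinearMap.flip_apply]
  ring

end Aux

/-- For a smooth contact map `f` of the first Heisenberg group, at every point the
determinant of the (Euclidean) Jacobian matrix of `f` equals `λ(f)²`,
where `λ(f) = Xf¹·Yf² − Xf²·Yf¹`. -/
theorem det_jacobian_contact (f : (Fin 3 → ℝ) → (Fin 3 → ℝ))
    (hf : ContDiff ℝ (⊤ : ℕ∞) f) (hc : IsContact3 f) (p : Fin 3 → ℝ) :
    Matrix.det (Matrix.of fun i j : Fin 3 => fderiv ℝ (fun q => f q i) p (Pi.single j 1))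
      = (lam3 f p) ^ 2 := by
  have hg : ∀ i : Fin 3, ContDiff ℝ (⊤ : ℕ∞) (fun q => f q i) := fun i =>
    (ContinuousLinearMap.proj i : ((j : Fin 3) → ℝ) →L[ℝ] ℝ).contDiff.comp hf
  have hgd : ∀ i : Fin 3, HasFDerivAt (fun q => f q i) (fderiv ℝ (fun q => f q i) p) p :=
    fun i => (((hg i).differentiable (by simp)) p).hasFDerivAt
  have hXdd : ∀ i : Fin 3,
      HasFDerivAt (Xd (fun q => f q i)) (fderiv ℝ (Xd (fun q => f q i)) p) p :=
    fun i => (((contDiff_Xd (hg i)).differentiable (by simp)) p).hasFDerivAt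
  have hYdd : ∀ i : Fin 3,
      HasFDerivAt (Yd (fun q => f q i)) (fderiv ℝ (Yd (fun q => f q i)) p) p :=
    fun i => (((contDiff_Yd (hg i)).differentiable (by simp)) p).hasFDerivAt
  have hsymm : ∀ i : Fin 3, IsSymmSndFDerivAt ℝ (fun q => f q i) p :=
    fun i => (hg i).contDiffAt.isSymmSndFDerivAt (by simp; exact WithTop.coe_le_coe.mpr le_top)
  -- the X-contact expression is identically 0, hence has zero derivative
  have hUzero : fderiv ℝ (fun q => Xd (fun r => f r 2) q + (1/2) * f q 1 * Xd (fun r => f r 0) q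
      - (1/2) * f q 0 * Xd (fun r => f r 1) q) p = 0 := by
    have h0 : (fun q => Xd (fun r => f r 2) q + (1/2) * f q 1 * Xd (fun r => f r 0) q
        - (1/2) * f q 0 * Xd (fun r => f r 1) q) = fun _ : Fin 3 → ℝ => (0:ℝ) :=
      funext hc.1
    rw [h0]; simp
  have hVzero : fderiv ℝ (fun q => Yd (fun r => f r 2) q + (1/2) * f q 1 * Yd (fun r => f r 0) q
      - (1/2) * f q 0 * Yd (fun r => f r 1) q) p = 0 := by
    have h0 : (fun q => Yd (fun r => f r 2) q + (1/2) * f q 1 * Yd (fun r => f r 0) q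
        - (1/2) * f q 0 * Yd (fun r => f r 1) q) = fun _ : Fin 3 → ℝ => (0:ℝ) :=
      funext hc.2
    rw [h0]; simp
  have hUb : HasFDerivAt (fun q => Xd (fun r => f r 2) q + (1/2) * f q 1 * Xd (fun r => f r 0) q
      - (1/2) * f q 0 * Xd (fun r => f r 1) q)
      (fderiv ℝ (Xd (fun r => f r 2)) p
        + (((1/2) * f p 1) • fderiv ℝ (Xd (fun r => f r 0)) p
            + Xd (fun r => f r 0) p • ((1/2 : ℝ) • fderiv ℝ (fun q => f q 1) p))
        - (((1/2) * f p 0) • fderiv ℝ (Xd (fun r => f r 1)) p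
            + Xd (fun r => f r 1) p • ((1/2 : ℝ) • fderiv ℝ (fun q => f q 0) p))) p :=
    ((hXdd 2).add (((hgd 1).const_mul ((1:ℝ)/2)).mul (hXdd 0))).sub
      (((hgd 0).const_mul ((1:ℝ)/2)).mul (hXdd 1))
  have hVb : HasFDerivAt (fun q => Yd (fun r => f r 2) q + (1/2) * f q 1 * Yd (fun r => f r 0) q
      - (1/2) * f q 0 * Yd (fun r => f r 1) q)
      (fderiv ℝ (Yd (fun r => f r 2)) p
        + (((1/2) * f p 1) • fderiv ℝ (Yd (fun r => f r 0)) p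
            + Yd (fun r => f r 0) p • ((1/2 : ℝ) • fderiv ℝ (fun q => f q 1) p))
        - (((1/2) * f p 0) • fderiv ℝ (Yd (fun r => f r 1)) p
            + Yd (fun r => f r 1) p • ((1/2 : ℝ) • fderiv ℝ (fun q => f q 0) p))) p :=
    ((hYdd 2).add (((hgd 1).const_mul ((1:ℝ)/2)).mul (hYdd 0))).sub
      (((hgd 0).const_mul ((1:ℝ)/2)).mul (hYdd 1))
  have hUcl := hUb.fderiv.symm.trans hUzero
  have hVcl := hVb.fderiv.symm.trans hVzero
  have hu1 := congrArg (fun (L : (Fin 3 → ℝ) →L[ℝ] ℝ) => L (Pi.single 1 1)) hUcl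
  have hu2 := congrArg (fun (L : (Fin 3 → ℝ) →L[ℝ] ℝ) => L (Pi.single 2 1)) hUcl
  have hv0 := congrArg (fun (L : (Fin 3 → ℝ) →L[ℝ] ℝ) => L (Pi.single 0 1)) hVcl
  have hv2 := congrArg (fun (L : (Fin 3 → ℝ) →L[ℝ] ℝ) => L (Pi.single 2 1)) hVcl
  simp only [ContinuousLinearMap.add_apply, ContinuousLinearMap.sub_apply,
    ContinuousLinearMap.smul_apply, smul_eq_mul, ContinuousLinearMap.zero_apply]
    at hu1 hu2 hv0 hv2
  rw [fderiv_Xd_apply (hg 0) p, fderiv_Xd_apply (hg 1) p, fderiv_Xd_apply (hg 2) p] at hu1 hu2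
  rw [fderiv_Yd_apply (hg 0) p, fderiv_Yd_apply (hg 1) p, fderiv_Yd_apply (hg 2) p] at hv0 hv2
  -- normalize second derivatives using symmetry
  rw [hsymm 0 (Pi.single 1 1) (Pi.single 0 1), hsymm 1 (Pi.single 1 1) (Pi.single 0 1),
    hsymm 2 (Pi.single 1 1) (Pi.single 0 1)] at hu1
  rw [hsymm 0 (Pi.single 2 1) (Pi.single 0 1), hsymm 1 (Pi.single 2 1) (Pi.single 0 1),
    hsymm 2 (Pi.single 2 1) (Pi.single 0 1)] at hu2
  rw [hsymm 0 (Pi.single 2 1) (Pi.single 1 1), hsymm 1 (Pi.single 2 1) (Pi.single 1 1),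
    hsymm 2 (Pi.single 2 1) (Pi.single 1 1)] at hv2
  simp only [Xd, Yd, Pi.single_apply, Fin.isValue,
    show ((1:Fin 3) = 2) = False from by decide, show ((0:Fin 3) = 2) = False from by decide,
    show ((0:Fin 3) = 1) = False from by decide, show ((2:Fin 3) = 1) = False from by decide,
    show ((2:Fin 3) = 0) = False from by decide, show ((1:Fin 3) = 0) = False from by decide,
    if_false, if_true, eq_self_iff_true, zero_div, zero_mul, mul_zero, add_zero,
    zero_add] at hu1 hu2 hv0 hv2
  have hc1 := hc.1 p
  have hc2 := hc.2 p
  simp only [Xd, Yd] at hc1 hc2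
  simp only [Matrix.det_fin_three, Matrix.of_apply, lam3, Xd, Yd]
  linear_combination
    ((fderiv ℝ (fun q => f q 0) p (Pi.single 1 1) + p 0/2 * fderiv ℝ (fun q => f q 0) p (Pi.single 2 1))
        * fderiv ℝ (fun q => f q 1) p (Pi.single 2 1)
      - (fderiv ℝ (fun q => f q 1) p (Pi.single 1 1) + p 0/2 * fderiv ℝ (fun q => f q 1) p (Pi.single 2 1))
        * fderiv ℝ (fun q => f q 0) p (Pi.single 2 1)) * hc1
    + ((fderiv ℝ (fun q => f q 1) p (Pi.single 0 1) - p 1/2 * fderiv ℝ (fun q => f q 1) p (Pi.single 2 1))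
        * fderiv ℝ (fun q => f q 0) p (Pi.single 2 1)
      - (fderiv ℝ (fun q => f q 0) p (Pi.single 0 1) - p 1/2 * fderiv ℝ (fun q => f q 0) p (Pi.single 2 1))
        * fderiv ℝ (fun q => f q 1) p (Pi.single 2 1)) * hc2
    + ((fderiv ℝ (fun q => f q 0) p (Pi.single 0 1) - p 1/2 * fderiv ℝ (fun q => f q 0) p (Pi.single 2 1))
        * (fderiv ℝ (fun q => f q 1) p (Pi.single 1 1) + p 0/2 * fderiv ℝ (fun q => f q 1) p (Pi.single 2 1))
      - (fderiv ℝ (fun q => f q 1) p (Pi.single 0 1) - p 1/2 * fderiv ℝ (fun q => f q 1) p (Pi.single 2 1))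
        * (fderiv ℝ (fun q => f q 0) p (Pi.single 1 1) + p 0/2 * fderiv ℝ (fun q => f q 0) p (Pi.single 2 1)))
      * (hv0 - p 1/2 * hv2 - hu1 - p 0/2 * hu2)
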